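/- Let f : ℝ^d → ℝ be L-smooth with L > 0, let x* be a global minimizer of f, and let x₀ ∈ ℝ^d satisfy |f(x₀) - f(x*)| ≤ R. On a probability space with filtration (F_t), suppose SGD is run for T iterations as follows: at each iteration t ∈ {1,…,T}, a stochastic gradient g_t = ∇f(x_{t-1}) + ξ_t is received, where the noise ξ_t satisfies E[ξ_t | F_{t-1}] = 0 and E[‖ξ_t‖² | F_{t-1}] ≤ σ² (with x_{t-1} being F_{t-1}-measurable and σ > 0), and the iterate is updated by x_t = x_{t-1} - (1/L) · (⟨∇f(x_{t-1}), g_t⟩ / ‖g_t‖²) · g_t (with the step taken to be 0 if g_t = 0). Then min_{t=1,…,T} E[‖∇f(x_t)‖²] ≤ 2LR/T + σ·√(2LR/T). -/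

import Mathlib

/-!
By the descent lemma, the step along `g = ∇f(x) + ξ` lowers `f` by at least
`⟪∇f(x), g⟫² / (2L‖g‖²)`. Conditionally on the past, `E⟪∇f(x), g⟫ = ‖∇f(x)‖²` and
`E‖g‖² ≤ ‖∇f(x)‖² + σ²`, so Cauchy–Schwarz bounds the expected decrease from below by
`G² / (2L(G + σ²))`, where `G = E‖∇f(x)‖²`. Telescoping (the last iterate is handled by
`‖∇f‖² ≤ 2L(f - f(x*))`) shows that these quantities sum to at most `2LR` over the `T` iterates,
so one of them is at most `2LR/T`, and solving `G² ≤ c(G + σ²)` for `G` gives the bound.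
-/

open MeasureTheory ProbabilityTheory Finset
open scoped RealInnerProductSpace

section Smooth
variable {E : Type*} [NormedAddCommGroup E] [InnerProductSpace ℝ E] [CompleteSpace E]
  {f : E → ℝ} {L : ℝ}

theorem continuous_gradient_of_lipschitz
    (hsmooth : ∀ x y, ‖gradient f x - gradient f y‖ ≤ L * ‖x - y‖) : Continuous (gradient f) :=
  (LipschitzWith.of_dist_le' (K := L) fun x y => by
    simpa only [dist_eq_norm] using hsmooth x y).continuous

theorem apply_add_le_of_lipschitz_gradient (hdiff : Differentiable ℝ f)
    (hsmooth : ∀ x y, ‖gradient f x - gradient f y‖ ≤ L * ‖x - y‖) (x v : E) :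
    f (x + v) ≤ f x + ⟪gradient f x, v⟫ + L / 2 * ‖v‖ ^ 2 := by
  set φ : ℝ → ℝ := fun t => t * ⟪gradient f x, v⟫ + L / 2 * t ^ 2 * ‖v‖ ^ 2 - f (x + t • v)
  have hderiv : ∀ t : ℝ, HasDerivAt φ
      (⟪gradient f x, v⟫ + L * t * ‖v‖ ^ 2 - ⟪gradient f (x + t • v), v⟫) t := by
    intro t
    have hline : HasDerivAt (fun s : ℝ => x + s • v) v t := by
      simpa using ((hasDerivAt_id t).smul_const v).const_add x
    have hf := ((hdiff (x + t • v)).hasGradientAt.hasFDerivAt).comp_hasDerivAt t hline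
    have hq := ((hasDerivAt_id t).mul_const ⟪gradient f x, v⟫).add
      (((hasDerivAt_pow 2 t).const_mul (L / 2)).mul_const (‖v‖ ^ 2))
    refine (hq.sub hf).congr_deriv ?_
    simp only [InnerProductSpace.toDual_apply_apply]
    ring
  have hmono : MonotoneOn φ (Set.Icc 0 1) := by
    refine monotoneOn_of_hasDerivWithinAt_nonneg (convex_Icc 0 1)
      (fun t _ => (hderiv t).continuousAt.continuousWithinAt)
      (fun t _ => (hderiv t).hasDerivWithinAt) fun t ht => ?_
    rw [interior_Icc] at ht
    have hlip : ‖gradient f (x + t • v) - gradient f x‖ ≤ L * t * ‖v‖ := by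
      simpa [norm_smul, abs_of_pos ht.1, mul_assoc] using hsmooth (x + t • v) x
    have := real_inner_le_norm (gradient f (x + t • v) - gradient f x) v
    rw [inner_sub_left] at this
    nlinarith [norm_nonneg v]
  have := hmono (Set.left_mem_Icc.mpr zero_le_one) (Set.right_mem_Icc.mpr zero_le_one) zero_le_one
  norm_num [φ, -inner_gradient_left] at this
  linarith

noncomputable def optimalStep (f : E → ℝ) (L : ℝ) (x g : E) : E :=
  x - ((1 / L) * (⟪gradient f x, g⟫ / ‖g‖ ^ 2)) • g

theorem inner_sq_div_norm_sq_le_sub_apply_optimalStep (hL : 0 < L) (hdiff : Differentiable ℝ f)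
    (hsmooth : ∀ x y, ‖gradient f x - gradient f y‖ ≤ L * ‖x - y‖) (x g : E) :
    ⟪gradient f x, g⟫ ^ 2 / ‖g‖ ^ 2 ≤ 2 * L * (f x - f (optimalStep f L x g)) := by
  rcases eq_or_ne g 0 with rfl | hg
  · simp [optimalStep]
  set c := (1 / L) * (⟪gradient f x, g⟫ / ‖g‖ ^ 2)
  have h := apply_add_le_of_lipschitz_gradient hdiff hsmooth x (-c • g)
  have hstep : x + -c • g = optimalStep f L x g := by rw [optimalStep, neg_smul, ← sub_eq_add_neg]
  rw [hstep, inner_smul_right, norm_smul, mul_pow, Real.norm_eq_abs, sq_abs] at h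
  have hg2 : 0 < ‖g‖ ^ 2 := by positivity
  have hdecr : -c * ⟪gradient f x, g⟫ + L / 2 * ((-c) ^ 2 * ‖g‖ ^ 2) =
      -(⟪gradient f x, g⟫ ^ 2 / ‖g‖ ^ 2 / (2 * L)) := by
    simp only [c]
    field_simp
    ring
  rw [← div_le_iff₀' (by positivity)]
  linarith

theorem sq_norm_gradient_le (hL : 0 < L) (hdiff : Differentiable ℝ f)
    (hsmooth : ∀ x y, ‖gradient f x - gradient f y‖ ≤ L * ‖x - y‖) {a : ℝ} (ha : ∀ z, a ≤ f z)
    (y : E) : ‖gradient f y‖ ^ 2 ≤ 2 * L * (f y - a) := by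
  have h := inner_sq_div_norm_sq_le_sub_apply_optimalStep hL hdiff hsmooth y (gradient f y)
  rw [real_inner_self_eq_norm_sq, sq (‖gradient f y‖ ^ 2), mul_self_div_self] at h
  have := ha (optimalStep f L y (gradient f y))
  nlinarith

theorem apply_optimalStep_le (hL : 0 < L) (hdiff : Differentiable ℝ f)
    (hsmooth : ∀ x y, ‖gradient f x - gradient f y‖ ≤ L * ‖x - y‖) (x g : E) :
    f (optimalStep f L x g) ≤ f x := by
  have := inner_sq_div_norm_sq_le_sub_apply_optimalStep hL hdiff hsmooth x g
  have : 0 ≤ ⟪gradient f x, g⟫ ^ 2 / ‖g‖ ^ 2 := by positivity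
  nlinarith

theorem apply_le_apply_zero_of_optimalStep (hL : 0 < L) (hdiff : Differentiable ℝ f)
    (hsmooth : ∀ x y, ‖gradient f x - gradient f y‖ ≤ L * ‖x - y‖) {y g : ℕ → E} {T : ℕ}
    (hy : ∀ s < T, y (s + 1) = optimalStep f L (y s) (g s)) : ∀ s ≤ T, f (y s) ≤ f (y 0) := by
  intro s
  induction s with
  | zero => exact fun _ => le_rfl
  | succ s ih =>
    intro hs
    rw [hy s hs]
    exact (apply_optimalStep_le hL hdiff hsmooth _ _).trans (ih (by omega))

end Smooth

section Expectation
variable {Ω : Type*} {m m0 : MeasurableSpace Ω} {μ : Measure Ω}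

theorem sq_integral_mul_le_integral_sq_mul_integral_sq {u w : Ω → ℝ}
    (hu : Integrable (fun ω => u ω ^ 2) μ) (hw : Integrable (fun ω => w ω ^ 2) μ)
    (huw : Integrable (fun ω => u ω * w ω) μ) :
    (∫ ω, u ω * w ω ∂μ) ^ 2 ≤ (∫ ω, u ω ^ 2 ∂μ) * ∫ ω, w ω ^ 2 ∂μ := by
  have hquad : ∀ s : ℝ, 0 ≤ (∫ ω, w ω ^ 2 ∂μ) * (s * s) + (-2 * ∫ ω, u ω * w ω ∂μ) * s +
      ∫ ω, u ω ^ 2 ∂μ := by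
    intro s
    have hexpand : ∀ ω, (u ω - s * w ω) ^ 2 = u ω ^ 2 - 2 * s * (u ω * w ω) + s ^ 2 * w ω ^ 2 :=
      fun ω => by ring
    have hnonneg : 0 ≤ ∫ ω, (u ω - s * w ω) ^ 2 ∂μ := integral_nonneg fun ω => sq_nonneg _
    simp only [hexpand] at hnonneg
    rw [integral_add (f := fun ω => u ω ^ 2 - 2 * s * (u ω * w ω))
        (hu.sub (huw.const_mul _)) (hw.const_mul _),
      integral_sub hu (huw.const_mul _), integral_const_mul, integral_const_mul] at hnonneg
    linarith
  have := discrim_le_zero hquad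
  rw [discrim] at this
  linarith

theorem integrable_apply_of_le [IsFiniteMeasure μ] {X : Type*} [TopologicalSpace X] {f : X → ℝ}
    (hf : Continuous f) {y : Ω → X} (hy : AEStronglyMeasurable y μ) {a b : ℝ}
    (ha : ∀ z, a ≤ f z) (hb : ∀ ω, f (y ω) ≤ b) : Integrable (fun ω => f (y ω)) μ :=
  .of_bound (hf.comp_aestronglyMeasurable hy) _
    (ae_of_all _ fun ω => abs_le_max_abs_abs (ha _) (hb ω))

variable {E : Type*} [NormedAddCommGroup E] [InnerProductSpace ℝ E] [CompleteSpace E]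
  {f : E → ℝ} {L : ℝ}

theorem integral_inner_eq_zero_of_condExp_eq_zero (hm : m ≤ m0) [SigmaFinite (μ.trim hm)]
    {u ξ : Ω → E} (hu : StronglyMeasurable[m] u) (huξ : Integrable (fun ω => ⟪u ω, ξ ω⟫) μ)
    (hξ : Integrable ξ μ) (hmean : μ[ξ|m] =ᵐ[μ] 0) : ∫ ω, ⟪u ω, ξ ω⟫ ∂μ = 0 := by
  rw [← integral_condExp hm]
  refine integral_eq_zero_of_ae ?_
  filter_upwards [condExp_bilin_of_stronglyMeasurable_left (innerSL ℝ) hu huξ hξ, hmean]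
    with ω hpull hzero
  exact hpull.trans (by simp [hzero])

theorem integral_le_of_condExp_le [IsProbabilityMeasure μ] (hm : m ≤ m0) {g : Ω → ℝ} {c : ℝ}
    (h : ∀ᵐ ω ∂μ, μ[g|m] ω ≤ c) : ∫ ω, g ω ∂μ ≤ c := by
  rw [← integral_condExp hm]
  simpa using integral_mono_ae integrable_condExp (integrable_const c) h

theorem sq_integral_norm_sq_le [IsProbabilityMeasure μ] (hm : m ≤ m0) {u ξ : Ω → E} {σ : ℝ}
    (hu : StronglyMeasurable[m] u) (hu2 : Integrable (fun ω => ‖u ω‖ ^ 2) μ)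
    (hξ : Integrable ξ μ) (hξ2 : Integrable (fun ω => ‖ξ ω‖ ^ 2) μ) (hmean : μ[ξ|m] =ᵐ[μ] 0)
    (hvar : ∀ᵐ ω ∂μ, μ[fun ω' => ‖ξ ω'‖ ^ 2|m] ω ≤ σ ^ 2) :
    (∫ ω, ‖u ω‖ ^ 2 ∂μ) ^ 2 ≤
      (∫ ω, ⟪u ω, u ω + ξ ω⟫ ^ 2 / ‖u ω + ξ ω‖ ^ 2 ∂μ) * ((∫ ω, ‖u ω‖ ^ 2 ∂μ) + σ ^ 2) := by
  have hum : AEStronglyMeasurable u μ := (hu.mono hm).aestronglyMeasurable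
  have huξ : Integrable (fun ω => ⟪u ω, ξ ω⟫) μ := by
    refine ((hu2.add hξ2).div_const 2).mono' (hum.inner hξ.1) (ae_of_all _ fun ω => ?_)
    rw [Real.norm_eq_abs, Pi.add_apply]
    exact (abs_real_inner_le_norm _ _).trans (by nlinarith [sq_nonneg (‖u ω‖ - ‖ξ ω‖)])
  have hinner : ∀ ω, ⟪u ω, u ω + ξ ω⟫ = ‖u ω‖ ^ 2 + ⟪u ω, ξ ω⟫ := fun ω => by
    rw [inner_add_right, real_inner_self_eq_norm_sq]
  have hnorm : ∀ ω, ‖u ω + ξ ω‖ ^ 2 = ‖u ω‖ ^ 2 + 2 * ⟪u ω, ξ ω⟫ + ‖ξ ω‖ ^ 2 := fun ω =>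
    norm_add_sq_real _ _
  have hcross : ∫ ω, ⟪u ω, ξ ω⟫ ∂μ = 0 :=
    integral_inner_eq_zero_of_condExp_eq_zero hm hu huξ hξ hmean
  have hmean_inner : ∫ ω, ⟪u ω, u ω + ξ ω⟫ ∂μ = ∫ ω, ‖u ω‖ ^ 2 ∂μ := by
    simp only [hinner]
    rw [integral_add hu2 huξ, hcross, add_zero]
  have hsecond : ∫ ω, ‖u ω + ξ ω‖ ^ 2 ∂μ ≤ (∫ ω, ‖u ω‖ ^ 2 ∂μ) + σ ^ 2 := by
    simp only [hnorm]
    rw [integral_add (f := fun ω => ‖u ω‖ ^ 2 + 2 * ⟪u ω, ξ ω⟫) (hu2.add (huξ.const_mul 2)) hξ2,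
      integral_add hu2 (huξ.const_mul 2), integral_const_mul, hcross, mul_zero, add_zero]
    exact add_le_add le_rfl (integral_le_of_condExp_le hm hvar)
  set p : Ω → ℝ := fun ω => ⟪u ω, u ω + ξ ω⟫ / ‖u ω + ξ ω‖
  have hpq : ∀ ω, p ω * ‖u ω + ξ ω‖ = ⟪u ω, u ω + ξ ω⟫ := fun ω =>
    div_mul_cancel_of_imp fun h => by rw [norm_eq_zero.mp h, inner_zero_right]
  have hp2 : ∀ ω, p ω ^ 2 = ⟪u ω, u ω + ξ ω⟫ ^ 2 / ‖u ω + ξ ω‖ ^ 2 := fun ω => div_pow _ _ _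
  have hA : Integrable (fun ω => ⟪u ω, u ω + ξ ω⟫) μ := by
    simp only [hinner]
    exact hu2.add huξ
  have hg2 : Integrable (fun ω => ‖u ω + ξ ω‖ ^ 2) μ := by
    simp only [hnorm]
    exact (hu2.add (huξ.const_mul 2)).add hξ2
  have hpm : AEStronglyMeasurable p μ :=
    (hA.aemeasurable.div (hum.add hξ.1).norm.aemeasurable).aestronglyMeasurable
  have hp2int : Integrable (fun ω => p ω ^ 2) μ := by
    refine hu2.mono' (hpm.pow 2) (ae_of_all _ fun ω => ?_)
    rw [Real.norm_eq_abs, abs_of_nonneg (sq_nonneg _), hp2]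
    refine div_le_of_le_mul₀ (sq_nonneg _) (sq_nonneg _) ?_
    rw [← mul_pow]
    exact sq_le_sq.mpr ((abs_real_inner_le_norm _ _).trans (le_abs_self _))
  have hcs := sq_integral_mul_le_integral_sq_mul_integral_sq hp2int hg2
    (by simpa only [hpq] using hA)
  simp only [hpq, hp2, hmean_inner] at hcs
  calc (∫ ω, ‖u ω‖ ^ 2 ∂μ) ^ 2 ≤ _ := hcs
    _ ≤ _ := mul_le_mul_of_nonneg_left hsecond (integral_nonneg fun ω => by positivity)

theorem sq_integral_norm_gradient_sq_le [IsProbabilityMeasure μ] (hm : m ≤ m0) {σ : ℝ} (hL : 0 < L)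
    (hdiff : Differentiable ℝ f)
    (hsmooth : ∀ x y, ‖gradient f x - gradient f y‖ ≤ L * ‖x - y‖) {y ξ : Ω → E}
    (hy : StronglyMeasurable[m] y) (hgrad : Integrable (fun ω => ‖gradient f (y ω)‖ ^ 2) μ)
    (hfy : Integrable (fun ω => f (y ω)) μ)
    (hfstep : Integrable (fun ω => f (optimalStep f L (y ω) (gradient f (y ω) + ξ ω))) μ)
    (hξ : Integrable ξ μ) (hξ2 : Integrable (fun ω => ‖ξ ω‖ ^ 2) μ) (hmean : μ[ξ|m] =ᵐ[μ] 0)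
    (hvar : ∀ᵐ ω ∂μ, μ[fun ω' => ‖ξ ω'‖ ^ 2|m] ω ≤ σ ^ 2) :
    (∫ ω, ‖gradient f (y ω)‖ ^ 2 ∂μ) ^ 2 ≤
      2 * L * ((∫ ω, f (y ω) ∂μ) -
        ∫ ω, f (optimalStep f L (y ω) (gradient f (y ω) + ξ ω)) ∂μ) *
      ((∫ ω, ‖gradient f (y ω)‖ ^ 2 ∂μ) + σ ^ 2) := by
  have hu : StronglyMeasurable[m] fun ω => gradient f (y ω) :=
    (continuous_gradient_of_lipschitz hsmooth).comp_stronglyMeasurable hy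
  refine (sq_integral_norm_sq_le hm hu hgrad hξ hξ2 hmean hvar).trans
    (mul_le_mul_of_nonneg_right ?_ (by positivity))
  rw [← integral_sub hfy hfstep, ← integral_const_mul]
  refine integral_mono_of_nonneg (ae_of_all _ fun ω => by positivity)
    ((hfy.sub hfstep).const_mul _) (ae_of_all _ fun ω => ?_)
  exact inner_sq_div_norm_sq_le_sub_apply_optimalStep hL hdiff hsmooth _ _

theorem integrable_norm_gradient_sq [IsFiniteMeasure μ] (hL : 0 < L) (hdiff : Differentiable ℝ f)
    (hsmooth : ∀ x y, ‖gradient f x - gradient f y‖ ≤ L * ‖x - y‖) {a : ℝ} (ha : ∀ z, a ≤ f z)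
    {y : Ω → E} (hy : AEStronglyMeasurable y μ) (hfy : Integrable (fun ω => f (y ω)) μ) :
    Integrable (fun ω => ‖gradient f (y ω)‖ ^ 2) μ :=
  ((hfy.sub (integrable_const a)).const_mul (2 * L)).mono'
    (((continuous_gradient_of_lipschitz hsmooth).comp_aestronglyMeasurable hy).norm.pow 2)
    (ae_of_all _ fun ω => by simpa using sq_norm_gradient_le hL hdiff hsmooth ha (y ω))

theorem integral_norm_gradient_sq_le [IsProbabilityMeasure μ] (hL : 0 < L)
    (hdiff : Differentiable ℝ f) (hsmooth : ∀ x y, ‖gradient f x - gradient f y‖ ≤ L * ‖x - y‖)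
    {a : ℝ} (ha : ∀ z, a ≤ f z) {y : Ω → E} (hy : AEStronglyMeasurable y μ)
    (hfy : Integrable (fun ω => f (y ω)) μ) :
    ∫ ω, ‖gradient f (y ω)‖ ^ 2 ∂μ ≤ 2 * L * ((∫ ω, f (y ω) ∂μ) - a) := by
  have h := integral_mono (g := fun ω => 2 * L * (f (y ω) - a))
    (integrable_norm_gradient_sq hL hdiff hsmooth ha hy hfy)
    ((hfy.sub (integrable_const a)).const_mul (2 * L))
    fun ω => sq_norm_gradient_le hL hdiff hsmooth ha (y ω)
  rwa [integral_const_mul, integral_sub hfy (integrable_const a), integral_const, probReal_univ,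
    one_smul] at h

variable [MeasurableSpace E] [BorelSpace E] [SecondCountableTopology E]

theorem aemeasurable_of_optimalStep (hgrad : Measurable (gradient f)) {x ξ : ℕ → Ω → E} {T : ℕ}
    (hx : AEMeasurable (x 0) μ) (hξ : ∀ s, AEMeasurable (ξ s) μ)
    (hstep : ∀ s < T,
      x (s + 1) = fun ω => optimalStep f L (x s ω) (gradient f (x s ω) + ξ (s + 1) ω)) :
    ∀ s ≤ T, AEMeasurable (x s) μ := by
  intro s
  induction s with
  | zero => exact fun _ => hx
  | succ s ih =>
    intro hs
    have hxs := ih (by omega)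
    have hξs := hξ (s + 1)
    rw [hstep s hs]
    simp only [optimalStep]
    fun_prop

end Expectation

theorem le_add_mul_sqrt_of_sq_le_mul_add_sq {G c σ : ℝ} (hc : 0 ≤ c) (hσ : 0 ≤ σ)
    (h : G ^ 2 ≤ c * (G + σ ^ 2)) : G ≤ c + σ * √c := by
  by_contra! hlt
  have hs := Real.sq_sqrt hc
  have hσs := mul_nonneg hσ (Real.sqrt_nonneg c)
  nlinarith [mul_pos (sub_pos.mpr hlt) (by linarith : 0 < G + σ * √c), mul_nonneg hσs hc]

theorem exists_le_add_mul_sqrt_of_sq_le_mul_sub {G J : ℕ → ℝ} {L R σ a : ℝ} {T : ℕ}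
    (hL : 0 < L) (hσ : 0 < σ) (hT : 1 ≤ T) (hG : ∀ s, 0 ≤ G s)
    (hstep : ∀ s ∈ Ico 1 T, G s ^ 2 ≤ 2 * L * (J s - J (s + 1)) * (G s + σ ^ 2))
    (hlast : G T ≤ 2 * L * (J T - a)) (hJ : J 1 - a ≤ R) :
    ∃ s, 1 ≤ s ∧ s ≤ T ∧ G s ≤ 2 * L * R / T + σ * √(2 * L * R / T) := by
  have hpos : ∀ s, 0 < G s + σ ^ 2 := fun s => by have := hG s; positivity
  have htelescope : ∑ s ∈ Ico 1 T, 2 * L * (J s - J (s + 1)) = 2 * L * (J 1 - J T) := by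
    rw [← mul_sum, ← neg_sub (J T) (J 1), ← sum_Ico_sub J hT, ← sum_neg_distrib]
    simp only [neg_sub]
  have hsum : ∑ s ∈ Ico 1 (T + 1), G s ^ 2 / (G s + σ ^ 2) ≤ 2 * L * R := by
    rw [sum_Ico_succ_top hT]
    have hbody : ∑ s ∈ Ico 1 T, G s ^ 2 / (G s + σ ^ 2) ≤ 2 * L * (J 1 - J T) :=
      htelescope ▸ sum_le_sum fun s hs => (div_le_iff₀ (hpos s)).mpr (hstep s hs)
    have htop : G T ^ 2 / (G T + σ ^ 2) ≤ G T :=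
      div_le_of_le_mul₀ (hpos T).le (hG T) (by nlinarith [hG T, sq_nonneg σ])
    nlinarith
  have hc : 0 ≤ 2 * L * R / T :=
    div_nonneg ((sum_nonneg fun s _ => div_nonneg (sq_nonneg _) (hpos s).le).trans hsum)
      (Nat.cast_nonneg T)
  obtain ⟨s, hs, hs_le⟩ := exists_le_of_sum_le (s := Ico 1 (T + 1))
    (f := fun s => G s ^ 2 / (G s + σ ^ 2)) (g := fun _ => 2 * L * R / T)
    ⟨1, by simp; omega⟩ (by
      rw [sum_const, Nat.card_Ico, nsmul_eq_mul, Nat.add_sub_cancel,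
        mul_div_cancel₀ _ (by positivity)]
      exact hsum)
  rw [mem_Ico] at hs
  exact ⟨s, hs.1, by omega,
    le_add_mul_sqrt_of_sq_le_mul_add_sq hc hσ.le ((div_le_iff₀ (hpos s)).mp hs_le)⟩

theorem stmt_1_general {d : ℕ} {f : EuclideanSpace ℝ (Fin d) → ℝ} {L R σ : ℝ}
    (hL : 0 < L) (hσ : 0 < σ)
    (hdiff : Differentiable ℝ f)
    (hsmooth : ∀ x y, ‖gradient f x - gradient f y‖ ≤ L * ‖x - y‖)
    (xstar : EuclideanSpace ℝ (Fin d)) (hmin : ∀ y, f xstar ≤ f y)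
    {Ω : Type*} {m0 : MeasurableSpace Ω} {μ : Measure Ω} [IsProbabilityMeasure μ]
    (F : Filtration ℕ m0)
    (T : ℕ) (hT : 1 ≤ T)
    (x : ℕ → Ω → EuclideanSpace ℝ (Fin d))
    (ξ : ℕ → Ω → EuclideanSpace ℝ (Fin d))
    (hξint : ∀ t, Integrable (ξ t) μ)
    (hξint2 : ∀ t, Integrable (fun ω => ‖ξ t ω‖ ^ 2) μ)
    (x₀ : EuclideanSpace ℝ (Fin d)) (hx0 : ∀ ω, x 0 ω = x₀)
    (hR : |f x₀ - f xstar| ≤ R)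
    (hadapted : ∀ t, 1 ≤ t → t ≤ T → StronglyMeasurable[F (t - 1)] (x (t - 1)))
    (hmean : ∀ t, 1 ≤ t → t ≤ T → μ[ξ t|F (t - 1)] =ᵐ[μ] 0)
    (hvar : ∀ t, 1 ≤ t → t ≤ T →
      ∀ᵐ ω ∂μ, (μ[fun ω' => ‖ξ t ω'‖ ^ 2|F (t - 1)]) ω ≤ σ ^ 2)
    (hupdate : ∀ t, 1 ≤ t → t ≤ T → ∀ ω,
      x t ω = x (t - 1) ω -
        ((1 / L) * (⟪gradient f (x (t - 1) ω), gradient f (x (t - 1) ω) + ξ t ω⟫ /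
            ‖gradient f (x (t - 1) ω) + ξ t ω‖ ^ 2)) •
          (gradient f (x (t - 1) ω) + ξ t ω)) :
    ∃ t, 1 ≤ t ∧ t ≤ T ∧
      ∫ ω, ‖gradient f (x t ω)‖ ^ 2 ∂μ ≤
        2 * L * R / T + σ * Real.sqrt (2 * L * R / T) := by
  have hstep : ∀ s < T, x (s + 1) =
      fun ω => optimalStep f L (x s ω) (gradient f (x s ω) + ξ (s + 1) ω) :=
    fun s hs => funext (hupdate (s + 1) (by omega) hs)
  have hdescent : ∀ s ≤ T, ∀ ω, f (x s ω) ≤ f x₀ := fun s hs ω => hx0 ω ▸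
    apply_le_apply_zero_of_optimalStep hL hdiff hsmooth (y := fun s => x s ω)
      (fun s hs => congrFun (hstep s hs) ω) s hs
  have hmeas := aemeasurable_of_optimalStep (continuous_gradient_of_lipschitz hsmooth).measurable
    (funext hx0 ▸ aemeasurable_const) (fun s => (hξint s).aemeasurable) hstep
  have hf_int : ∀ s ≤ T, Integrable (fun ω => f (x s ω)) μ := fun s hs =>
    integrable_apply_of_le hdiff.continuous (hmeas s hs).aestronglyMeasurable hmin (hdescent s hs)
  refine exists_le_add_mul_sqrt_of_sq_le_mul_sub (J := fun s => ∫ ω, f (x s ω) ∂μ) (a := f xstar)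
    hL hσ hT (fun s => integral_nonneg fun ω => by positivity) (fun s hs => ?_)
    (integral_norm_gradient_sq_le hL hdiff hsmooth hmin (hmeas T le_rfl).aestronglyMeasurable
      (hf_int T le_rfl)) ?_
  · rw [mem_Ico] at hs
    have h := sq_integral_norm_gradient_sq_le (F.le s) hL hdiff hsmooth
      (by simpa using hadapted (s + 1) (by omega) (by omega))
      (integrable_norm_gradient_sq hL hdiff hsmooth hmin (hmeas s (by omega)).aestronglyMeasurable
        (hf_int s (by omega)))
      (hf_int s (by omega)) (by simpa [hstep s hs.2] using hf_int (s + 1) (by omega))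
      (hξint (s + 1)) (hξint2 (s + 1)) (by simpa using hmean (s + 1) (by omega) (by omega))
      (by simpa using hvar (s + 1) (by omega) (by omega))
    simpa [hstep s hs.2] using h
  · have h := integral_mono (hf_int 1 hT) (integrable_const (f x₀)) fun ω => hdescent 1 hT ω
    rw [integral_const, probReal_univ, one_smul] at h
    linarith [le_of_abs_le hR]

/-- SGD with the locally optimal step size
`ηₜ = ⟨∇f(x_{t-1}), gₜ⟩/(L‖gₜ‖²)` in the direction of the stochastic gradient
`gₜ = ∇f(x_{t-1}) + ξₜ` (zero conditional mean, conditional second moment `≤ σ²`),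
on an `L`-smooth `f` with `|f(x₀) - f(x*)| ≤ R` for a global minimizer `x*`, satisfies
`min_{t=1..T} E[‖∇f(xₜ)‖²] ≤ 2LR/T + σ√(2LR/T)`.
(When `gₜ = 0`, division by zero makes the step `0`, matching the convention.) -/
theorem stmt_1 {d : ℕ} {f : EuclideanSpace ℝ (Fin d) → ℝ} {L R σ : ℝ}
    (hL : 0 < L) (hσ : 0 < σ)
    (hdiff : Differentiable ℝ f)
    (hsmooth : ∀ x y, ‖gradient f x - gradient f y‖ ≤ L * ‖x - y‖)
    (xstar : EuclideanSpace ℝ (Fin d)) (hmin : ∀ y, f xstar ≤ f y)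
    {Ω : Type*} {m0 : MeasurableSpace Ω} {μ : Measure Ω} [IsProbabilityMeasure μ]
    (F : Filtration ℕ m0)
    (T : ℕ) (hT : 1 ≤ T)
    (x : ℕ → Ω → EuclideanSpace ℝ (Fin d))
    (ξ : ℕ → Ω → EuclideanSpace ℝ (Fin d))
    (hξmeas : ∀ t, Measurable (ξ t))
    (hξint : ∀ t, Integrable (ξ t) μ)
    (hξint2 : ∀ t, Integrable (fun ω => ‖ξ t ω‖ ^ 2) μ)
    (x₀ : EuclideanSpace ℝ (Fin d)) (hx0 : ∀ ω, x 0 ω = x₀)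
    (hR : |f x₀ - f xstar| ≤ R)
    (hadapted : ∀ t, 1 ≤ t → t ≤ T → StronglyMeasurable[F (t - 1)] (x (t - 1)))
    (hmean : ∀ t, 1 ≤ t → t ≤ T → μ[ξ t|F (t - 1)] =ᵐ[μ] 0)
    (hvar : ∀ t, 1 ≤ t → t ≤ T →
      ∀ᵐ ω ∂μ, (μ[fun ω' => ‖ξ t ω'‖ ^ 2|F (t - 1)]) ω ≤ σ ^ 2)
    (hupdate : ∀ t, 1 ≤ t → t ≤ T → ∀ ω,
      x t ω = x (t - 1) ω -
        ((1 / L) * (⟪gradient f (x (t - 1) ω), gradient f (x (t - 1) ω) + ξ t ω⟫ /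
            ‖gradient f (x (t - 1) ω) + ξ t ω‖ ^ 2)) •
          (gradient f (x (t - 1) ω) + ξ t ω)) :
    ∃ t, 1 ≤ t ∧ t ≤ T ∧
      ∫ ω, ‖gradient f (x t ω)‖ ^ 2 ∂μ ≤
        2 * L * R / T + σ * Real.sqrt (2 * L * R / T) :=
  stmt_1_general hL hσ hdiff hsmooth xstar hmin F T hT x ξ hξint hξint2 x₀ hx0 hR hadapted hmean
    hvar hupdate
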